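/- arXiv:1707.01797 — 4 statements merged into one kernel-verified Lean document; each statement's English description precedes it below -/
import Mathlib

section
/- Let G be a graph and A a subset of vertices. If P is a simple path in G and Z is a subset of N(A) such that every A-traverse of P (maximal subpath containing a vertex of A with all internal vertices in A) has at least one endpoint in Z, and P is not contained in A, then the number of A-traverses of P is at most 2|Z|. -/
/-- The neighborhood of a vertex set `A`: vertices outside `A` adjacent to some vertex of `A`. -/
def nbd {V : Type*} (G : SimpleGraph V) (A : Set V) : Set V :=
  {v | v ∉ A ∧ ∃ a ∈ A, G.Adj v a}

/-- `P` is a (nonempty) simple path in `G`, represented as its list of vertices. -/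
def IsPathList {V : Type*} (G : SimpleGraph V) (P : List V) : Prop :=
  P ≠ [] ∧ P.Chain' G.Adj ∧ P.Nodup

/-- `Q` is an `A`-traverse of `P`: a maximal subpath (contiguous sublist) of `P` containing
a vertex of `A` with all internal vertices in `A`. -/
def IsTraverse {V : Type*} (G : SimpleGraph V) (A : Set V) (P Q : List V) : Prop :=
  Q <:+: P ∧ (∃ v ∈ Q, v ∈ A) ∧ (∀ v ∈ Q.tail.dropLast, v ∈ A) ∧
    ∀ Q', Q' <:+: P → Q <:+: Q' →
      ((∃ v ∈ Q', v ∈ A) ∧ ∀ v ∈ Q'.tail.dropLast, v ∈ A) → Q' = Q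

lemma aux_split {α : Type*} {z : α} : ∀ (s₁ : List α) (s₂ u₁ u₂ : List α),
    (s₁ ++ z :: u₁).Nodup → s₁ ++ z :: u₁ = s₂ ++ z :: u₂ → s₁ = s₂ ∧ u₁ = u₂ := by
  intro s₁
  induction s₁ with
  | nil =>
    intro s₂ u₁ u₂ hn he
    cases s₂ with
    | nil => simpa using he
    | cons b s₂' =>
      simp only [List.nil_append, List.cons_append, List.cons.injEq] at he
      exfalso
      have hz : z ∈ u₁ := by
        rw [he.2]; simp [he.1]
      simp [List.nodup_cons] at hn
      exact hn.1 hz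
  | cons a s₁' ih =>
    intro s₂ u₁ u₂ hn he
    cases s₂ with
    | nil =>
      simp only [List.nil_append, List.cons_append, List.cons.injEq] at he
      exfalso
      have hz : a ∈ s₁' ++ z :: u₁ := by
        rw [← he.1]; simp
      simp only [List.cons_append, List.nodup_cons] at hn
      exact hn.1 hz
    | cons b s₂' =>
      simp only [List.cons_append, List.cons.injEq] at he
      simp only [List.cons_append, List.nodup_cons] at hn
      obtain ⟨h1, h2⟩ := ih s₂' u₁ u₂ hn.2 he.2
      exact ⟨by rw [he.1, h1], h2⟩

lemma head_comparable {α : Type*} {P Q₁ Q₂ : List α} {z : α} (hn : P.Nodup)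
    (h1 : Q₁ <:+: P) (h2 : Q₂ <:+: P)
    (e1 : Q₁.head? = some z) (e2 : Q₂.head? = some z) :
    Q₁ <:+: Q₂ ∨ Q₂ <:+: Q₁ := by
  obtain ⟨s₁, t₁, hp1⟩ := h1
  obtain ⟨s₂, t₂, hp2⟩ := h2
  obtain ⟨r₁, rfl⟩ : ∃ r, Q₁ = z :: r := by
    cases Q₁ with
    | nil => simp at e1
    | cons a r => simp at e1; exact ⟨r, by rw [e1]⟩
  obtain ⟨r₂, rfl⟩ : ∃ r, Q₂ = z :: r := by
    cases Q₂ with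
    | nil => simp at e2
    | cons a r => simp at e2; exact ⟨r, by rw [e2]⟩
  have hp1' : s₁ ++ z :: (r₁ ++ t₁) = P := by simpa using hp1
  have hp2' : s₂ ++ z :: (r₂ ++ t₂) = P := by simpa using hp2
  have := aux_split s₁ s₂ (r₁ ++ t₁) (r₂ ++ t₂) (hp1' ▸ hn) (hp1'.trans hp2'.symm)
  have hpre : (z :: r₁) <+: (z :: (r₂ ++ t₂)) ∧ (z :: r₂) <+: (z :: (r₂ ++ t₂)) := by
    constructor
    · rw [← this.2]; exact ⟨t₁, by simp⟩
    · exact ⟨t₂, by simp⟩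
  rcases List.prefix_or_prefix_of_prefix hpre.1 hpre.2 with h | h
  · exact Or.inl h.isInfix
  · exact Or.inr h.isInfix

lemma last_comparable {α : Type*} {P Q₁ Q₂ : List α} {z : α} (hn : P.Nodup)
    (h1 : Q₁ <:+: P) (h2 : Q₂ <:+: P)
    (e1 : Q₁.getLast? = some z) (e2 : Q₂.getLast? = some z) :
    Q₁ <:+: Q₂ ∨ Q₂ <:+: Q₁ := by
  have := head_comparable (P := P.reverse) (Q₁ := Q₁.reverse) (Q₂ := Q₂.reverse) (z := z)
    (List.nodup_reverse.2 hn) (List.reverse_infix.2 h1) (List.reverse_infix.2 h2)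
    (by rw [List.head?_reverse]; exact e1) (by rw [List.head?_reverse]; exact e2)
  rcases this with h | h
  · exact Or.inl (List.reverse_infix.1 h)
  · exact Or.inr (List.reverse_infix.1 h)

/-- If every `A`-traverse of the simple path `P` has an endpoint in `Z ⊆ N(A)`, and `P` is not
contained in `A`, then the number of `A`-traverses of `P` is at most `2|Z|`. -/
theorem numTraverses_le_two_mul_guard {V : Type*} [Fintype V] (G : SimpleGraph V)
    (A Z : Set V) (P : List V)
    (hP : IsPathList G P)
    (hZ : Z ⊆ nbd G A)
    (hnot : ∃ v ∈ P, v ∉ A)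
    (hguard : ∀ Q, IsTraverse G A P Q →
      ∃ z ∈ Z, Q.head? = some z ∨ Q.getLast? = some z) :
    {Q | IsTraverse G A P Q}.ncard ≤ 2 * Z.ncard := by
  classical
  set S := {Q | IsTraverse G A P Q} with hS
  have hnodup : P.Nodup := hP.2.2
  -- comparable traverses are equal
  have heq : ∀ Q₁ Q₂, IsTraverse G A P Q₁ → IsTraverse G A P Q₂ → Q₁ <:+: Q₂ → Q₁ = Q₂ := by
    intro Q₁ Q₂ h₁ h₂ hinf
    exact (h₁.2.2.2 Q₂ h₂.1 hinf ⟨h₂.2.1, h₂.2.2.1⟩).symm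
  have heq' : ∀ Q₁ Q₂ : S, (Q₁ : List V) <:+: (Q₂ : List V) ∨ (Q₂ : List V) <:+: (Q₁ : List V)
      → Q₁ = Q₂ := by
    rintro ⟨Q₁, h₁⟩ ⟨Q₂, h₂⟩ (h | h)
    · exact Subtype.ext (heq Q₁ Q₂ h₁ h₂ h)
    · exact (Subtype.ext (heq Q₂ Q₁ h₂ h₁ h)).symm
  choose zf hzfZ hzfe using fun (Q : S) => hguard Q Q.2
  set f : S → Z × Bool := fun Q =>
    (⟨zf Q, hzfZ Q⟩, decide ((Q : List V).head? = some (zf Q))) with hf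
  have hinj : Function.Injective f := by
    intro Q₁ Q₂ he
    simp only [hf, Prod.mk.injEq, Subtype.mk.injEq] at he
    obtain ⟨hz, hb⟩ := he
    by_cases h1 : (Q₁ : List V).head? = some (zf Q₁)
    · have h2 : (Q₂ : List V).head? = some (zf Q₂) := by
        by_contra h2
        rw [decide_eq_true h1] at hb
        exact h2 (of_decide_eq_true hb.symm)
      rw [hz] at h1
      exact heq' Q₁ Q₂ (head_comparable hnodup Q₁.2.1 Q₂.2.1 h1 h2)
    · have h1' : (Q₁ : List V).getLast? = some (zf Q₁) := (hzfe Q₁).resolve_left h1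
      have h2 : ¬ (Q₂ : List V).head? = some (zf Q₂) := by
        intro h2
        rw [decide_eq_true h2] at hb
        exact h1 (of_decide_eq_true hb)
      have h2' : (Q₂ : List V).getLast? = some (zf Q₂) := (hzfe Q₂).resolve_left h2
      rw [hz] at h1'
      exact heq' Q₁ Q₂ (last_comparable hnodup Q₁.2.1 Q₂.2.1 h1' h2')
  have hcard : Nat.card S ≤ Nat.card (Z × Bool) := Nat.card_le_card_of_injective f hinj
  have hb : Nat.card Bool = 2 := by simp [Nat.card_eq_fintype_card]
  rw [Nat.card_prod, hb, Nat.card_coe_set_eq, Nat.card_coe_set_eq] at hcard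
  omega
end

section
/- Let G be a graph admitting a tree decomposition (T,X) of width less than w, adhesion at most h, and adhesion degree at most a ≥ 2. Then for every integer p with |V(G)| > p, there exists a separation (A,B) of G of order at most h such that p < |A| ≤ w + p·a. -/
/-- `(tG, bag)` is a tree decomposition of `G`: `tG` is a tree, bags cover all vertices
and edges, and for every vertex the set of nodes whose bag contains it is connected in `tG`
(expressed via a walk all of whose vertices' bags contain it). -/
def IsTreeDecomp {V T : Type*} (G : SimpleGraph V) (tG : SimpleGraph T)
    (bag : T → Set V) : Prop :=
  tG.IsTree ∧
  (∀ v, ∃ t, v ∈ bag t) ∧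
  (∀ u v, G.Adj u v → ∃ t, u ∈ bag t ∧ v ∈ bag t) ∧
  (∀ v t₁ t₂, v ∈ bag t₁ → v ∈ bag t₂ →
    ∃ p : tG.Walk t₁ t₂, ∀ t ∈ p.support, v ∈ bag t)

/-- `(A, B)` is a separation of `G`: `A ∪ B = V(G)` and there is no edge between
`A ∖ B` and `B ∖ A`. -/
def IsSeparation {V : Type*} (G : SimpleGraph V) (A B : Set V) : Prop :=
  A ∪ B = Set.univ ∧ ∀ u v, G.Adj u v → ¬(u ∈ A \ B ∧ v ∈ B \ A)

/-! For an edge `tt'` of the decomposition tree, the union of the bags on the `t'`-side of `tt'`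
meets the rest of the graph only inside the adhesion `bag t ∩ bag t'`, so any union of such
branches at a common node `c` is one side of a separation whose order is controlled by the
adhesions involved.

Choose an edge `tt'` whose branch has more than `p` vertices with `t'` as low as possible (if there
is none, any node `t'` will do), so that every other branch at `t'` has at most `p` vertices. Group
these branches by their adhesion with `t'`. If some group covers more than `p` vertices, adding its
branches one at a time stops with more than `p` but at most `2p ≤ p·a` vertices, separated by a
single adhesion. Otherwise the bag of `t'` and at most `a` groups of at most `p` vertices cover the
big branch (or all of `G`), which is then itself the required side. -/

open Set

namespace Finset

variable {ι α β : Type*}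

lemma exists_subset_lt_ncard_biUnion_le_two_mul {f : ι → Set α} {p : ℕ} (N : Finset ι)
    (hf : ∀ i ∈ N, (f i).ncard ≤ p) (hN : p < (⋃ i ∈ N, f i).ncard) :
    ∃ N' ⊆ N, p < (⋃ i ∈ N', f i).ncard ∧ (⋃ i ∈ N', f i).ncard ≤ 2 * p := by
  classical
  induction N using Finset.induction_on with
  | empty => simp at hN
  | insert x N _ ih =>
    by_cases hsmall : (⋃ i ∈ N, f i).ncard ≤ p
    · refine ⟨insert x N, subset_rfl, hN, ?_⟩
      rw [set_biUnion_insert]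
      have := hf x (mem_insert_self x N)
      exact (ncard_union_le _ _).trans (by omega)
    · obtain ⟨N', hN', h⟩ := ih (fun i hi => hf i (mem_insert_of_mem hi)) (not_le.mp hsmall)
      exact ⟨N', hN'.trans (subset_insert x N), h⟩

lemma ncard_biUnion_le_card_image_mul [DecidableEq β] (P : Finset ι) (f : ι → Set α)
    (g : ι → β) {p : ℕ}
    (h : ∀ i ∈ P, (⋃ j ∈ P.filter (g · = g i), f j).ncard ≤ p) :
    (⋃ i ∈ P, f i).ncard ≤ (P.image g).card * p := by
  have hfibers : ⋃ i ∈ P, f i = ⋃ b ∈ P.image g, ⋃ j ∈ P.filter (g · = b), f j := by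
    ext v
    simp only [mem_iUnion, mem_image, mem_filter, exists_prop]
    constructor
    · rintro ⟨i, hi, hv⟩
      exact ⟨g i, ⟨i, hi, rfl⟩, i, ⟨hi, rfl⟩, hv⟩
    · rintro ⟨-, -, i, ⟨hi, -⟩, hv⟩
      exact ⟨i, hi, hv⟩
  rw [hfibers, ← smul_eq_mul]
  refine (set_ncard_biUnion_le _ _).trans (sum_le_card_nsmul _ _ _ ?_)
  simp only [mem_image, forall_exists_index, and_imp]
  rintro _ i hi rfl
  exact h i hi

end Finset

namespace SimpleGraph

variable {T : Type*} {tG : SimpleGraph T} {t t' s u r : T}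

def branch (tG : SimpleGraph T) (t t' : T) : Set T :=
  {u | (tG.deleteEdges {s(t, t')}).Reachable t' u}

lemma mem_branch_iff : u ∈ tG.branch t t' ↔ ∃ q : tG.Walk t' u, s(t, t') ∉ q.edges :=
  reachable_deleteEdges_iff_exists_walk

lemma mem_branch_self (t t' : T) : t' ∈ tG.branch t t' := Reachable.refl _

lemma Walk.mem_edges_of_mem_branch_of_notMem {x y : T} (q : tG.Walk x y)
    (hx : x ∈ tG.branch t t') (hy : y ∉ tG.branch t t') : s(t, t') ∈ q.edges := by
  by_contra hq
  exact hy (hx.trans (q.toDeleteEdge _ hq).reachable)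

lemma IsAcyclic.notMem_branch (hac : tG.IsAcyclic) (h : tG.Adj t t') : t ∉ tG.branch t t' :=
  fun hr => isBridge_iff.mp (isAcyclic_iff_forall_adj_isBridge.mp hac h) hr.symm

lemma IsAcyclic.disjoint_branch (hac : tG.IsAcyclic) (h : tG.Adj t t') :
    Disjoint (tG.branch t t') (tG.branch t' t) := by
  refine Set.disjoint_left.mpr fun x hx hx' => hac.notMem_branch h (hx.trans ?_)
  rw [branch, mem_ofPred_eq, Sym2.eq_swap] at hx'
  exact hx'.symm

lemma IsAcyclic.branch_ssubset (hac : tG.IsAcyclic) (h : tG.Adj t t') (h' : tG.Adj t' s)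
    (hs : s ≠ t) : tG.branch t' s ⊂ tG.branch t t' := by
  classical
  refine ⟨fun x hx => ?_, fun hsub => hac.notMem_branch h' (hsub (mem_branch_self t t'))⟩
  obtain ⟨q, hq⟩ := mem_branch_iff.mp hx
  have hq' : s(t, t') ∉ q.edges := fun he =>
    hac.notMem_branch h' (mem_branch_iff.mpr ⟨q.takeUntil t' (q.snd_mem_support_of_mem_edges he),
      fun he' => hq (q.edges_takeUntil_subset_edges _ he')⟩)
  refine mem_branch_iff.mpr ⟨Walk.cons h' q, ?_⟩
  simp only [Walk.edges_cons, List.mem_cons, not_or]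
  refine ⟨?_, hq'⟩
  rw [Sym2.eq_iff]
  rintro (⟨h1, -⟩ | ⟨h2, -⟩)
  · exact h.ne h1
  · exact hs h2.symm

lemma Connected.exists_adj_mem_branch (hconn : tG.Connected) (hu : u ≠ r) :
    ∃ s, tG.Adj r s ∧ u ∈ tG.branch r s := by
  classical
  obtain ⟨q, hq⟩ : ∃ q : tG.Walk r u, q.IsPath := ⟨_, ((hconn r u).some.toPath).2⟩
  cases q with
  | nil => exact absurd rfl hu
  | @cons _ s _ h q =>
    rw [Walk.cons_isPath_iff] at hq
    exact ⟨s, h, mem_branch_iff.mpr ⟨q, fun he => hq.2 (q.fst_mem_support_of_mem_edges he)⟩⟩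

lemma IsTree.exists_adj_ne_mem_branch (htree : tG.IsTree) (h : tG.Adj t t')
    (hu : u ∈ tG.branch t t') (hne : u ≠ t') :
    ∃ s, tG.Adj t' s ∧ s ≠ t ∧ u ∈ tG.branch t' s := by
  obtain ⟨s, hs, hus⟩ := htree.connected.exists_adj_mem_branch hne
  refine ⟨s, hs, ?_, hus⟩
  rintro rfl
  exact Set.disjoint_left.mp (htree.isAcyclic.disjoint_branch h) hu hus

lemma IsAcyclic.exists_lowest_adj [Finite T] (hac : tG.IsAcyclic) {Q : T → T → Prop}
    (hQ : ∃ x y, tG.Adj x y ∧ Q x y) :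
    ∃ t t', tG.Adj t t' ∧ Q t t' ∧ ∀ s, tG.Adj t' s → s ≠ t → ¬ Q t' s := by
  obtain ⟨x, y, hxy⟩ := hQ
  obtain ⟨⟨t, t'⟩, ⟨h, hQ⟩, hmin⟩ :=
    (measure fun e : T × T => (tG.branch e.1 e.2).ncard).wf.has_min
      {e | tG.Adj e.1 e.2 ∧ Q e.1 e.2} ⟨(x, y), hxy⟩
  refine ⟨t, t', h, hQ, fun s h' hs hQ' => hmin (t', s) ⟨h', hQ'⟩ ?_⟩
  exact Set.ncard_lt_ncard (hac.branch_ssubset h h' hs)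

end SimpleGraph

def SimpleGraph.branchVerts {V T : Type*} (tG : SimpleGraph T) (bag : T → Set V) (t t' : T) :
    Set V :=
  ⋃ u ∈ tG.branch t t', bag u

def HasSeparation {V : Type*} (G : SimpleGraph V) (h p m : ℕ) : Prop :=
  ∃ A B : Set V, IsSeparation G A B ∧ (A ∩ B).ncard ≤ h ∧ p < A.ncard ∧ A.ncard ≤ m

namespace IsTreeDecomp

variable {V T : Type*} {G : SimpleGraph V} {tG : SimpleGraph T} {bag : T → Set V}
  {t t' u : T} {v : V} {w h a p : ℕ}

lemma mem_inter_of_mem_branchVerts (hTD : IsTreeDecomp G tG bag)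
    (hv : v ∈ tG.branchVerts bag t t') (hu : u ∉ tG.branch t t') (hvu : v ∈ bag u) :
    v ∈ bag t ∩ bag t' := by
  obtain ⟨z, hz, hvz⟩ := mem_iUnion₂.mp hv
  obtain ⟨q, hq⟩ := hTD.2.2.2 v z u hvz hvu
  have he := q.mem_edges_of_mem_branch_of_notMem hz hu
  exact ⟨hq t (q.fst_mem_support_of_mem_edges he), hq t' (q.snd_mem_support_of_mem_edges he)⟩

lemma exists_mem_branchVerts (hTD : IsTreeDecomp G tG bag) (r : T) (v : V) :
    v ∈ bag r ∨ ∃ s, tG.Adj r s ∧ v ∈ tG.branchVerts bag r s := by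
  obtain ⟨u, hu⟩ := hTD.2.1 v
  rcases eq_or_ne u r with rfl | hur
  · exact Or.inl hu
  · obtain ⟨s, hs, hus⟩ := hTD.1.connected.exists_adj_mem_branch hur
    exact Or.inr ⟨s, hs, mem_biUnion hus hu⟩

lemma exists_mem_branchVerts_of_mem_branchVerts (hTD : IsTreeDecomp G tG bag)
    (h : tG.Adj t t') (hv : v ∈ tG.branchVerts bag t t') :
    v ∈ bag t' ∨ ∃ s, tG.Adj t' s ∧ s ≠ t ∧ v ∈ tG.branchVerts bag t' s := by
  obtain ⟨u, hu, hvu⟩ := mem_iUnion₂.mp hv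
  rcases eq_or_ne u t' with rfl | hut
  · exact Or.inl hvu
  · obtain ⟨s, hs, hst, hus⟩ := hTD.1.exists_adj_ne_mem_branch h hu hut
    exact Or.inr ⟨s, hs, hst, mem_biUnion hus hvu⟩

lemma exists_isSeparation_biUnion_branchVerts (hTD : IsTreeDecomp G tG bag) (c : T)
    (N : Set T) :
    ∃ B, IsSeparation G (⋃ s ∈ N, tG.branchVerts bag c s) B ∧
      (⋃ s ∈ N, tG.branchVerts bag c s) ∩ B ⊆ ⋃ s ∈ N, bag c ∩ bag s := by
  set far := {u | ∀ s ∈ N, u ∉ tG.branch c s}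
  have near_of_notMem_far {u} (hu : u ∉ far) : ∃ s ∈ N, u ∈ tG.branch c s := by
    simpa [far] using hu
  refine ⟨⋃ u ∈ far, bag u, ⟨eq_univ_of_forall fun v => ?_, ?_⟩, ?_⟩
  · obtain ⟨u, hu⟩ := hTD.2.1 v
    by_cases hfar : u ∈ far
    · exact Or.inr (mem_biUnion hfar hu)
    · obtain ⟨s, hs, hus⟩ := near_of_notMem_far hfar
      exact Or.inl (mem_biUnion hs (mem_biUnion hus hu))
  · rintro x y hxy ⟨⟨-, hxB⟩, -, hyA⟩
    obtain ⟨u, hxu, hyu⟩ := hTD.2.2.1 x y hxy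
    by_cases hfar : u ∈ far
    · exact hxB (mem_biUnion hfar hxu)
    · obtain ⟨s, hs, hus⟩ := near_of_notMem_far hfar
      exact hyA (mem_biUnion hs (mem_biUnion hus hyu))
  · rintro v ⟨hvA, hvB⟩
    obtain ⟨s, hs, hvs⟩ := mem_iUnion₂.mp hvA
    obtain ⟨u, hu, hvu⟩ := mem_iUnion₂.mp hvB
    exact mem_biUnion hs (hTD.mem_inter_of_mem_branchVerts hvs (hu s hs) hvu)

lemma hasSeparation_of_forall_adhesion_subset [Finite V] (hTD : IsTreeDecomp G tG bag) {c : T}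
    {N : Set T} {S : Set V} (hS : S.ncard ≤ h) (hN : ∀ s ∈ N, bag c ∩ bag s ⊆ S) {m : ℕ}
    (hlo : p < (⋃ s ∈ N, tG.branchVerts bag c s).ncard)
    (hhi : (⋃ s ∈ N, tG.branchVerts bag c s).ncard ≤ m) : HasSeparation G h p m := by
  obtain ⟨B, hsep, hAB⟩ := hTD.exists_isSeparation_biUnion_branchVerts c N
  exact ⟨_, B, hsep, (ncard_le_ncard (hAB.trans (iUnion₂_subset hN))).trans hS, hlo, hhi⟩

lemma hasSeparation_or_ncard_le [Finite V] (hTD : IsTreeDecomp G tG bag) {c : T}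
    (hadh : ∀ s, tG.Adj c s → (bag c ∩ bag s).ncard ≤ h) (hwidth : (bag c).ncard ≤ w)
    (hadeg : {S : Set V | ∃ s, tG.Adj c s ∧ S = bag c ∩ bag s}.ncard ≤ a) (ha : 2 ≤ a)
    (P : Finset T) (hP : ∀ s ∈ P, tG.Adj c s)
    (hsmall : ∀ s ∈ P, (tG.branchVerts bag c s).ncard ≤ p) :
    HasSeparation G h p (w + p * a) ∨
      (bag c ∪ ⋃ s ∈ P, tG.branchVerts bag c s).ncard ≤ w + p * a := by
  classical
  by_cases hclass : ∃ s₀ ∈ P, p < (⋃ s ∈ P.filter (bag c ∩ bag · = bag c ∩ bag s₀),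
      tG.branchVerts bag c s).ncard
  · obtain ⟨s₀, hs₀, hbig⟩ := hclass
    obtain ⟨N, hNsub, hlo, hhi⟩ := Finset.exists_subset_lt_ncard_biUnion_le_two_mul _
      (fun s hs => hsmall s (Finset.mem_filter.mp hs).1) hbig
    refine Or.inl (hTD.hasSeparation_of_forall_adhesion_subset (N := N) (hadh s₀ (hP s₀ hs₀))
      (fun s hs => (Finset.mem_filter.mp (hNsub hs)).2.subset) hlo (hhi.trans ?_))
    nlinarith
  · push Not at hclass
    have hclasses : (P.image (bag c ∩ bag ·)).card ≤ a := by
      rw [← ncard_coe_finset]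
      refine (ncard_le_ncard fun S hS => ?_).trans hadeg
      obtain ⟨s, hs, rfl⟩ := Finset.mem_image.mp hS
      exact ⟨s, hP s hs, rfl⟩
    right
    calc _ ≤ (bag c).ncard + (⋃ s ∈ P, tG.branchVerts bag c s).ncard := ncard_union_le _ _
      _ ≤ w + (P.image (bag c ∩ bag ·)).card * p :=
          add_le_add hwidth (P.ncard_biUnion_le_card_image_mul _ _ hclass)
      _ ≤ w + p * a := by rw [mul_comm]; gcongr

lemma hasSeparation_of_forall_ncard_branchVerts_le [Finite V] [Fintype T]
    (hTD : IsTreeDecomp G tG bag) (hwidth : ∀ t, (bag t).ncard ≤ w)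
    (hadh : ∀ t t', tG.Adj t t' → (bag t ∩ bag t').ncard ≤ h)
    (hadeg : ∀ t, {S : Set V | ∃ t', tG.Adj t t' ∧ S = bag t ∩ bag t'}.ncard ≤ a)
    (ha : 2 ≤ a) (hsmall : ∀ t t', tG.Adj t t' → (tG.branchVerts bag t t').ncard ≤ p)
    (hp : p < Nat.card V) :
    HasSeparation G h p (w + p * a) := by
  classical
  obtain ⟨r, -⟩ := hTD.2.1 (Classical.choice (Nat.card_pos_iff.mp (by omega)).1)
  rcases hTD.hasSeparation_or_ncard_le (hadh r) (hwidth r) (hadeg r) ha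
    (Finset.univ.filter (tG.Adj r)) (by simp) (fun s hs => hsmall r s (by simpa using hs))
    with hsep | hle
  · exact hsep
  refine ⟨univ, ∅, ⟨union_empty _, fun _ _ _ ⟨_, hv, _⟩ => hv⟩, by simp,
    by rwa [ncard_univ], (ncard_le_ncard fun v _ => ?_).trans hle⟩
  rcases hTD.exists_mem_branchVerts r v with hv | ⟨s, hs, hv⟩
  · exact Or.inl hv
  · exact Or.inr (mem_biUnion (by simpa using hs) hv)

lemma hasSeparation_of_exists_lt_ncard_branchVerts [Finite V] [Fintype T]
    (hTD : IsTreeDecomp G tG bag) (hwidth : ∀ t, (bag t).ncard ≤ w)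
    (hadh : ∀ t t', tG.Adj t t' → (bag t ∩ bag t').ncard ≤ h)
    (hadeg : ∀ t, {S : Set V | ∃ t', tG.Adj t t' ∧ S = bag t ∩ bag t'}.ncard ≤ a)
    (ha : 2 ≤ a) (hlarge : ∃ t t', tG.Adj t t' ∧ p < (tG.branchVerts bag t t').ncard) :
    HasSeparation G h p (w + p * a) := by
  classical
  obtain ⟨t, t', hadj, hbig, hbelow⟩ := hTD.1.isAcyclic.exists_lowest_adj hlarge
  push Not at hbelow
  rcases hTD.hasSeparation_or_ncard_le (hadh t') (hwidth t') (hadeg t') ha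
    (Finset.univ.filter fun s => tG.Adj t' s ∧ s ≠ t) (by simp +contextual)
    (fun s hs => (Finset.mem_filter.mp hs).2.elim (hbelow s)) with hsep | hle
  · exact hsep
  refine hTD.hasSeparation_of_forall_adhesion_subset (c := t) (N := {t'}) (hadh t t' hadj)
    (by simp) (by rwa [biUnion_singleton]) ?_
  rw [biUnion_singleton]
  refine (ncard_le_ncard fun v hv => ?_).trans hle
  rcases hTD.exists_mem_branchVerts_of_mem_branchVerts hadj hv with hv | ⟨s, hs, hst, hv⟩
  · exact Or.inl hv
  · exact Or.inr (mem_biUnion (by simpa using ⟨hs, hst⟩) hv)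

end IsTreeDecomp

/-- From a tree decomposition of width less than `w`, adhesion at most `h`, and adhesion degree
at most `a ≥ 2`, one obtains for every `p < |V(G)|` a separation `(A,B)` of order at most `h`
with `p < |A| ≤ w + p·a`. -/
theorem decomp_gives_separation {V T : Type*} [Fintype V] [Fintype T]
    (G : SimpleGraph V) (tG : SimpleGraph T) (bag : T → Set V) (w h a p : ℕ)
    (hdecomp : IsTreeDecomp G tG bag)
    (hwidth : ∀ t, (bag t).ncard ≤ w)
    (hadh : ∀ t t', tG.Adj t t' → (bag t ∩ bag t').ncard ≤ h)
    (hadeg : ∀ t, {S : Set V | ∃ t', tG.Adj t t' ∧ S = bag t ∩ bag t'}.ncard ≤ a)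
    (ha : 2 ≤ a) (hp : p < Fintype.card V) :
    ∃ A B : Set V, IsSeparation G A B ∧ (A ∩ B).ncard ≤ h ∧
      p < A.ncard ∧ A.ncard ≤ w + p * a := by
  by_cases hlarge : ∃ t t', tG.Adj t t' ∧ p < (tG.branchVerts bag t t').ncard
  · exact hdecomp.hasSeparation_of_exists_lt_ncard_branchVerts hwidth hadh hadeg ha hlarge
  · push Not at hlarge
    exact hdecomp.hasSeparation_of_forall_ncard_branchVerts_le hwidth hadh hadeg ha hlarge
      (by rwa [Nat.card_eq_fintype_card])
end

section
/- Let T be a rooted tree and B₁ ⊆ V(T) a nonempty set of nodes. Let B₂ be the closure of B₁ ∪ {root} under taking lowest common ancestors of pairs. Then |B₂| ≤ 2|B₁| + 1, and every connected component C of T − B₂ has at most 2 neighbors in B₂: one being the parent of the root of C, and at most one node of C having a child in B₂. -/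
/-- In the tree `tG` rooted at `r`, `a` is an ancestor of `b` iff `a` lies on the unique
path from `r` to `b`, expressed via distances. -/
def Ancestor {T : Type*} (tG : SimpleGraph T) (r a b : T) : Prop :=
  tG.dist r b = tG.dist r a + tG.dist a b

/-- `c` is the lowest common ancestor of `a` and `b` in the tree `tG` rooted at `r`. -/
def IsLCA {T : Type*} (tG : SimpleGraph T) (r c a b : T) : Prop :=
  Ancestor tG r c a ∧ Ancestor tG r c b ∧
    ∀ d, Ancestor tG r d a → Ancestor tG r d b → Ancestor tG r d c

/-- `S` is closed under taking lowest common ancestors of pairs. -/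
def LCAClosed {T : Type*} (tG : SimpleGraph T) (r : T) (S : Set T) : Prop :=
  ∀ a ∈ S, ∀ b ∈ S, ∀ c, IsLCA tG r c a b → c ∈ S

namespace LCAHelp
open SimpleGraph Walk

variable {T : Type*} {tG : SimpleGraph T} {r a b c x : T}

noncomputable def upath (htree : tG.IsTree) (a b : T) : tG.Walk a b :=
  (htree.existsUnique_path a b).choose

lemma upath_isPath (htree : tG.IsTree) : (upath htree a b).IsPath :=
  (htree.existsUnique_path a b).choose_spec.1

lemma upath_eq (htree : tG.IsTree) {p : tG.Walk a b} (hp : p.IsPath) : p = upath htree a b :=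
  (htree.existsUnique_path a b).choose_spec.2 p hp

lemma length_upath (htree : tG.IsTree) : (upath htree a b).length = tG.dist a b := by
  obtain ⟨p, hp, hl⟩ := htree.isConnected.exists_path_of_dist a b
  rw [upath_eq htree hp] at hl
  exact hl

lemma dist_of_mem (htree : tG.IsTree) (h : c ∈ (upath htree a b).support) :
    tG.dist a b = tG.dist a c + tG.dist c b := by
  classical
  have hs := ((upath htree a b).take_spec h).symm
  have h1 : tG.dist a c ≤ ((upath htree a b).takeUntil c h).length :=
    tG.dist_le _
  have h2 : tG.dist c b ≤ ((upath htree a b).dropUntil c h).length :=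
    tG.dist_le _
  have h3 : ((upath htree a b).takeUntil c h).length
      + ((upath htree a b).dropUntil c h).length = tG.dist a b := by
    rw [← length_upath htree]
    conv_rhs => rw [hs]
    rw [length_append]
  have h4 : tG.dist a b ≤ tG.dist a c + tG.dist c b := htree.isConnected.dist_triangle
  omega

lemma append_isPath (htree : tG.IsTree) (h : tG.dist a b = tG.dist a c + tG.dist c b) :
    ((upath htree a c).append (upath htree c b)).IsPath := by
  apply Walk.isPath_of_length_eq_dist
  rw [length_append, length_upath htree, length_upath htree, h]

lemma mem_of_dist (htree : tG.IsTree) (h : tG.dist a b = tG.dist a c + tG.dist c b) :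
    c ∈ (upath htree a b).support := by
  rw [← upath_eq htree (append_isPath htree h)]
  exact Walk.subset_support_append_left _ _ ((upath htree a c).end_mem_support)

lemma anc_total (htree : tG.IsTree) (ha : tG.dist r x = tG.dist r a + tG.dist a x)
    (hb : tG.dist r x = tG.dist r b + tG.dist b x) :
    tG.dist r b = tG.dist r a + tG.dist a b ∨ tG.dist r a = tG.dist r b + tG.dist b a := by
  classical
  have hbmem := mem_of_dist htree hb
  have hamem := mem_of_dist htree ha
  rw [← (upath htree r x).take_spec hbmem, Walk.mem_support_append_iff] at hamem
  rcases hamem with h1 | h1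
  · left
    have hp : ((upath htree r x).takeUntil b hbmem).IsPath := (upath_isPath htree).takeUntil _
    rw [upath_eq htree hp] at h1
    exact dist_of_mem htree h1
  · right
    have hp : ((upath htree r x).dropUntil b hbmem).IsPath := (upath_isPath htree).dropUntil _
    rw [upath_eq htree hp] at h1
    have := dist_of_mem htree h1
    omega

lemma anc_antisymm (htree : tG.IsTree) (h1 : tG.dist r a = tG.dist r b + tG.dist b a)
    (h2 : tG.dist r b = tG.dist r a + tG.dist a b) : a = b := by
  have hd : tG.dist a b = 0 := by omega
  exact (htree.isConnected.dist_eq_zero_iff).1 hd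

lemma anc_refl : Ancestor tG r a a := by
  show tG.dist r a = tG.dist r a + tG.dist a a
  simp [SimpleGraph.dist_self]

lemma anc_trans (htree : tG.IsTree) (h1 : tG.dist r b = tG.dist r a + tG.dist a b)
    (h2 : tG.dist r c = tG.dist r b + tG.dist b c) :
    tG.dist r c = tG.dist r a + tG.dist a c := by
  have t1 : tG.dist a c ≤ tG.dist a b + tG.dist b c := htree.isConnected.dist_triangle
  have t2 : tG.dist r c ≤ tG.dist r a + tG.dist a c := htree.isConnected.dist_triangle
  omega

lemma exists_lca (htree : tG.IsTree) (r a b : T) :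
    ∃ m, IsLCA tG r m a b ∧ tG.dist a b = tG.dist a m + tG.dist m b := by
  classical
  set F := (upath htree r a).support.toFinset ∩ (upath htree r b).support.toFinset with hF
  have hrF : r ∈ F := by
    simp [hF, Walk.start_mem_support]
  obtain ⟨m, hmF, hmax⟩ := F.exists_max_image (fun z => tG.dist r z) ⟨r, hrF⟩
  simp only [hF, Finset.mem_inter, List.mem_toFinset] at hmF
  have hma : tG.dist r a = tG.dist r m + tG.dist m a := dist_of_mem htree hmF.1
  have hmb : tG.dist r b = tG.dist r m + tG.dist m b := dist_of_mem htree hmF.2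
  have hmaxd : ∀ d, tG.dist r a = tG.dist r d + tG.dist d a →
      tG.dist r b = tG.dist r d + tG.dist d b → tG.dist r m = tG.dist r d + tG.dist d m := by
    intro d hda hdb
    have hdF : d ∈ F := by
      simp only [hF, Finset.mem_inter, List.mem_toFinset]
      exact ⟨mem_of_dist htree hda, mem_of_dist htree hdb⟩
    have hle : tG.dist r d ≤ tG.dist r m := hmax d hdF
    rcases anc_total htree hda hma with h | h
    · exact h
    · have : tG.dist m d = 0 := by omega
      have : m = d := (htree.isConnected.dist_eq_zero_iff).1 this
      subst this
      simpa [SimpleGraph.dist_self] using h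
  have hdisj : ∀ z, z ∈ (upath htree m a).support → z ∈ (upath htree m b).support → z = m := by
    intro z hza hzb
    have h1 : tG.dist m a = tG.dist m z + tG.dist z a := dist_of_mem htree hza
    have h2 : tG.dist m b = tG.dist m z + tG.dist z b := dist_of_mem htree hzb
    have t1 : tG.dist r z ≤ tG.dist r m + tG.dist m z := htree.isConnected.dist_triangle
    have t2 : tG.dist r a ≤ tG.dist r z + tG.dist z a := htree.isConnected.dist_triangle
    have hza' : tG.dist r a = tG.dist r z + tG.dist z a := by omega
    have hzb' : tG.dist r b = tG.dist r z + tG.dist z b := by omega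
    have := hmaxd z hza' hzb'
    have h0 : tG.dist z m = 0 := by
      have hc := tG.dist_comm (u := m) (v := z)
      omega
    exact (htree.isConnected.dist_eq_zero_iff).1 h0
  have hw : ((upath htree m a).reverse.append (upath htree m b)).IsPath := by
    rw [Walk.isPath_def, Walk.support_append, Walk.support_reverse]
    apply List.Nodup.append
    · exact List.nodup_reverse.2 ((upath_isPath htree).support_nodup)
    · exact ((upath_isPath htree).support_nodup).tail
    · intro z hz1 hz2
      have hz1' : z ∈ (upath htree m a).support := List.mem_reverse.1 hz1
      have hz2' : z ∈ (upath htree m b).support := List.mem_of_mem_tail hz2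
      have hzm := hdisj z hz1' hz2'
      subst hzm
      have hnd := (upath_isPath (a := z) (b := b) htree).support_nodup
      rw [Walk.support_eq_cons] at hnd
      exact (List.nodup_cons.1 hnd).1 hz2
  have hwl : tG.dist a b = tG.dist a m + tG.dist m b := by
    have := length_upath htree (a := a) (b := b)
    rw [← upath_eq htree hw, Walk.length_append, Walk.length_reverse,
      length_upath htree, length_upath htree] at this
    rw [← this, tG.dist_comm (u := m) (v := a)]
  refine ⟨m, ⟨hma, hmb, fun d hda hdb => hmaxd d hda hdb⟩, hwl⟩

lemma lca_unique (htree : tG.IsTree) {c c' : T} (h1 : IsLCA tG r c a b)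
    (h2 : IsLCA tG r c' a b) : c = c' :=
  anc_antisymm htree (show tG.dist r c = tG.dist r c' + tG.dist c' c from h1.2.2 c' h2.1 h2.2.1)
    (show tG.dist r c' = tG.dist r c + tG.dist c c' from h2.2.2 c h1.1 h1.2.1)

lemma lca_self (htree : tG.IsTree) {c : T} (h : IsLCA tG r c a a) : c = a :=
  anc_antisymm htree (show tG.dist r c = tG.dist r a + tG.dist a c from h.2.2 a anc_refl anc_refl)
    (show tG.dist r a = tG.dist r c + tG.dist c a from h.1)

lemma isLCA_symm (h : IsLCA tG r c a b) : IsLCA tG r c b a :=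
  ⟨h.2.1, h.1, fun d h1 h2 => h.2.2 d h2 h1⟩


lemma anc_dist (h : Ancestor tG r a b) : tG.dist r b = tG.dist r a + tG.dist a b := h

lemma anc_of_dist (h : tG.dist r b = tG.dist r a + tG.dist a b) : Ancestor tG r a b := h

lemma exists_small_closed (htree : tG.IsTree) (r : T) (F : Finset T) :
    ∃ S : Finset T, (↑F ∪ {r} : Set T) ⊆ ↑S ∧ LCAClosed tG r ↑S ∧ S.card ≤ 2 * F.card + 1 := by
  classical
  induction F using Finset.induction_on with
  | empty =>
    refine ⟨{r}, by simp, ?_, by simp⟩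
    intro a ha b hb c hc
    simp only [Finset.coe_singleton, Set.mem_singleton_iff] at ha hb ⊢
    subst ha; subst hb
    exact lca_self htree hc
  | @insert x F hxF ih =>
    obtain ⟨S, hS1, hS2, hS3⟩ := ih
    have hrS : r ∈ (↑S : Set T) := hS1 (Or.inr rfl)
    set P := ((upath htree r x).support.toFinset).filter
      (fun z => ∃ s ∈ S, IsLCA tG r z x s) with hP
    have hPne : P.Nonempty := by
      obtain ⟨m₀, hm₀, _⟩ := exists_lca htree r x r
      refine ⟨m₀, ?_⟩
      simp only [hP, Finset.mem_filter, List.mem_toFinset]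
      exact ⟨mem_of_dist htree (anc_dist hm₀.1), r, Finset.mem_coe.1 hrS, hm₀⟩
    obtain ⟨m, hmP, hmax⟩ := P.exists_max_image (fun z => tG.dist r z) hPne
    simp only [hP, Finset.mem_filter, List.mem_toFinset] at hmP
    obtain ⟨hmsupp, s₀, hs₀S, hms₀⟩ := hmP
    have hmx : tG.dist r x = tG.dist r m + tG.dist m x := dist_of_mem htree hmsupp
    have hmemP : ∀ c s, s ∈ S → IsLCA tG r c x s → tG.dist r c ≤ tG.dist r m := by
      intro c s hs hc
      apply hmax
      simp only [hP, Finset.mem_filter, List.mem_toFinset]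
      exact ⟨mem_of_dist htree (anc_dist hc.1), s, hs, hc⟩
    have key : ∀ b ∈ S, ∀ c, IsLCA tG r c x b → c = m ∨ c ∈ S := by
      intro b hb c hc
      by_cases hcm : c = m
      · exact Or.inl hcm
      have hcx := anc_dist hc.1
      have hcm' : tG.dist r m = tG.dist r c + tG.dist c m := by
        rcases anc_total htree hcx hmx with h | h
        · exact h
        · exfalso; apply hcm
          have hle := hmemP c b hb hc
          have h0 : tG.dist m c = 0 := by omega
          exact ((htree.isConnected.dist_eq_zero_iff).1 h0).symm
      right
      refine hS2 s₀ (Finset.mem_coe.2 hs₀S) b (Finset.mem_coe.2 hb) c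
        ⟨anc_of_dist (anc_trans htree hcm' (anc_dist hms₀.2.1)), hc.2.1, ?_⟩
      intro d hds₀ hdb
      rcases anc_total htree (anc_dist hds₀) (anc_dist hms₀.2.1) with hdm | hmd
      · exact hc.2.2 d (anc_of_dist (anc_trans htree hdm hmx)) hdb
      · have hmb : tG.dist r b = tG.dist r m + tG.dist m b :=
          anc_trans htree hmd (anc_dist hdb)
        have hmc := hc.2.2 m (anc_of_dist hmx) (anc_of_dist hmb)
        exact absurd (anc_antisymm htree (anc_dist hmc) hcm') hcm
    have key2 : ∀ b ∈ S, ∀ c, IsLCA tG r c m b → c = m ∨ c ∈ S := by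
      intro b hb c hc
      obtain ⟨c', hc', _⟩ := exists_lca htree r x b
      have hc'm : tG.dist r m = tG.dist r c' + tG.dist c' m := by
        rcases anc_total htree (anc_dist hc'.1) hmx with h | h
        · exact h
        · have hle := hmemP c' b hb hc'
          have h0 : tG.dist m c' = 0 := by omega
          have hmc' : m = c' := (htree.isConnected.dist_eq_zero_iff).1 h0
          subst hmc'; simp [SimpleGraph.dist_self]
      have hlca' : IsLCA tG r c' m b :=
        ⟨anc_of_dist hc'm, hc'.2.1,
          fun d hdm hdb => hc'.2.2 d (anc_of_dist (anc_trans htree (anc_dist hdm) hmx)) hdb⟩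
      have hcc' := lca_unique htree hc hlca'
      subst hcc'
      exact key b hb c hc'
    refine ⟨insert x (insert m S), ?_, ?_, ?_⟩
    · intro z hz
      simp only [Finset.coe_insert, Set.mem_union, Set.mem_insert_iff,
        Set.mem_singleton_iff, Finset.mem_coe] at hz ⊢
      rcases hz with (rfl | hz) | rfl
      · exact Or.inl rfl
      · right; right
        exact Finset.mem_coe.1 (hS1 (Or.inl (by exact_mod_cast hz)))
      · right; right
        exact Finset.mem_coe.1 hrS
    · intro a ha b hb c hc
      simp only [Finset.coe_insert, Set.mem_insert_iff, Finset.mem_coe] at ha hb ⊢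
      have hSmem : ∀ {z : T}, z ∈ S → z = x ∨ z = m ∨ z ∈ S := fun h => Or.inr (Or.inr h)
      rcases ha with rfl | rfl | ha
      · rcases hb with rfl | rfl | hb
        · exact Or.inl (lca_self htree hc)
        · exact Or.inr (Or.inl (anc_antisymm htree
            (anc_dist (hc.2.2 b (anc_of_dist hmx) anc_refl)) (anc_dist hc.2.1)))
        · rcases key b hb c hc with rfl | h
          · exact Or.inr (Or.inl rfl)
          · exact Or.inr (Or.inr h)
      · rcases hb with rfl | rfl | hb
        · exact Or.inr (Or.inl (anc_antisymm htree
            (anc_dist (hc.2.2 a anc_refl (anc_of_dist hmx))) (anc_dist hc.1)))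
        · exact Or.inr (Or.inl (lca_self htree hc))
        · rcases key2 b hb c hc with rfl | h
          · exact Or.inr (Or.inl rfl)
          · exact Or.inr (Or.inr h)
      · rcases hb with rfl | rfl | hb
        · rcases key a ha c (isLCA_symm hc) with rfl | h
          · exact Or.inr (Or.inl rfl)
          · exact Or.inr (Or.inr h)
        · rcases key2 a ha c (isLCA_symm hc) with rfl | h
          · exact Or.inr (Or.inl rfl)
          · exact Or.inr (Or.inr h)
        · exact Or.inr (Or.inr (hS2 a (Finset.mem_coe.2 ha) b (Finset.mem_coe.2 hb) c hc))
    · have h1 := Finset.card_insert_le x (insert m S)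
      have h2 := Finset.card_insert_le m S
      rw [Finset.card_insert_of_notMem hxF]
      omega

lemma part2 [Finite T] (htree : tG.IsTree) (r : T) (B₂ : Set T) (hclosed : LCAClosed tG r B₂)
    (C : Set T) (hCcomp : C ⊆ B₂ᶜ) (hCconn : (tG.induce C).Connected)
    (hCcl : ∀ x ∈ C, ∀ y, tG.Adj x y → y ∉ B₂ → y ∈ C) :
    {t | t ∉ C ∧ ∃ c ∈ C, tG.Adj t c}.ncard ≤ 2 := by
  classical
  by_contra hlt
  push_neg at hlt
  obtain ⟨t₁, ht₁, t₂, ht₂, t₃, ht₃, h12, h13, h23⟩ :=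
    (Set.two_lt_ncard (Set.toFinite _)).1 hlt
  simp only [Set.mem_setOf_eq] at ht₁ ht₂ ht₃
  obtain ⟨ht₁C, c₁, hc₁C, hadj₁⟩ := ht₁
  obtain ⟨ht₂C, c₂, hc₂C, hadj₂⟩ := ht₂
  obtain ⟨ht₃C, c₃, hc₃C, hadj₃⟩ := ht₃
  have htB : ∀ t, t ∉ C → ∀ ct, ct ∈ C → tG.Adj t ct → t ∈ B₂ := by
    intro t htC ct hct hadj
    by_contra htB2
    exact htC (hCcl ct hct t hadj.symm htB2)
  have pathC : ∀ c ∈ C, ∀ c' ∈ C, ∃ p : tG.Walk c c', p.IsPath ∧ ∀ z ∈ p.support, z ∈ C := by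
    intro c hc c' hc'
    obtain ⟨q⟩ := hCconn ⟨c, hc⟩ ⟨c', hc'⟩
    let w := q.map (SimpleGraph.Embedding.induce C).toHom
    refine ⟨w.bypass, w.bypass_isPath, fun z hz => ?_⟩
    have hz2 := w.support_bypass_subset hz
    rw [Walk.support_map] at hz2
    obtain ⟨⟨z', hz'⟩, _, rfl⟩ := List.mem_map.1 hz2
    exact hz'
  have pairs : ∀ t t' ct ct', t ∉ C → t' ∉ C → ct ∈ C → ct' ∈ C → tG.Adj t ct →
      tG.Adj t' ct' → t ≠ t' →
      (Ancestor tG r t t' ∨ Ancestor tG r t' t) ∧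
      (Ancestor tG r t t' →
        tG.dist r t' = tG.dist r ct' + 1 ∧ tG.dist r ct = tG.dist r t + 1) := by
    intro t t' ct ct' htC ht'C hct hct' hadj hadj' hne
    obtain ⟨pc, hpc, hpcC⟩ := pathC ct hct ct' hct'
    let w : tG.Walk t t' := Walk.cons hadj (pc.append (Walk.cons hadj'.symm Walk.nil))
    have hwsupp : w.support = t :: (pc.support ++ [t']) := by
      simp [w, Walk.support_append]
    have hwpath : w.IsPath := by
      rw [Walk.isPath_def, hwsupp]
      refine List.nodup_cons.2 ⟨?_, ?_⟩
      · simp only [List.mem_append, List.mem_singleton]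
        rintro (h | rfl)
        · exact htC (hpcC _ h)
        · exact hne rfl
      · refine List.Nodup.append hpc.support_nodup (List.nodup_singleton _) ?_
        intro z hz1 hz2
        rw [List.mem_singleton] at hz2
        subst hz2
        exact ht'C (hpcC _ hz1)
    have hweq : w = upath htree t t' := upath_eq htree hwpath
    have hpcl : pc.length = tG.dist ct ct' := by
      rw [upath_eq htree hpc, length_upath htree]
    have hlen : tG.dist t t' = tG.dist ct ct' + 2 := by
      rw [← length_upath htree (a := t) (b := t'), ← hweq]
      simp only [w, Walk.length_cons, Walk.length_append, Walk.length_nil, hpcl]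
    have hctm : tG.dist t t' = tG.dist t ct + tG.dist ct t' := by
      apply dist_of_mem htree
      rw [← hweq, hwsupp]
      simp [pc.start_mem_support]
    have hct'm : tG.dist t t' = tG.dist t ct' + tG.dist ct' t' := by
      apply dist_of_mem htree
      rw [← hweq, hwsupp]
      simp [pc.end_mem_support]
    have had1 : tG.dist t ct = 1 := SimpleGraph.dist_eq_one_iff_adj.2 hadj
    have had2 : tG.dist ct' t' = 1 := SimpleGraph.dist_eq_one_iff_adj.2 hadj'.symm
    constructor
    · obtain ⟨m, hm, hbet⟩ := exists_lca htree r t t'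
      have hmB : m ∈ B₂ := hclosed t (htB t htC ct hct hadj) t' (htB t' ht'C ct' hct' hadj') m hm
      have hmsupp : m ∈ w.support := by
        rw [hweq]
        exact mem_of_dist htree hbet
      rw [hwsupp] at hmsupp
      simp only [List.mem_cons, List.mem_append, List.mem_singleton, List.not_mem_nil,
        or_false] at hmsupp
      rcases hmsupp with rfl | hmC | rfl
      · exact Or.inl hm.2.1
      · exact absurd hmB (hCcomp (hpcC _ hmC))
      · exact Or.inr hm.1
    · intro hanc
      have hanc' := anc_dist hanc
      have t1 : tG.dist r t' ≤ tG.dist r ct' + tG.dist ct' t' := htree.isConnected.dist_triangle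
      have t2 : tG.dist r ct' ≤ tG.dist r t + tG.dist t ct' := htree.isConnected.dist_triangle
      have t3 : tG.dist r ct ≤ tG.dist r t + tG.dist t ct := htree.isConnected.dist_triangle
      have t4 : tG.dist r t' ≤ tG.dist r ct + tG.dist ct t' := htree.isConnected.dist_triangle
      omega
  have chain : ∀ t t' t'' ct ct' ct'', t ∉ C → t' ∉ C → t'' ∉ C → ct ∈ C → ct' ∈ C →
      ct'' ∈ C → tG.Adj t ct → tG.Adj t' ct' → tG.Adj t'' ct'' → t ≠ t' → t' ≠ t'' →
      Ancestor tG r t t' → Ancestor tG r t' t'' → False := by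
    intro t t' t'' ct ct' ct'' htC ht'C ht''C hct hct' hct'' hadj hadj' hadj'' hne hne' ha1 ha2
    have h1 := (pairs t t' ct ct' htC ht'C hct hct' hadj hadj' hne).2 ha1
    have h2 := (pairs t' t'' ct' ct'' ht'C ht''C hct' hct'' hadj' hadj'' hne').2 ha2
    omega
  have P12 := (pairs t₁ t₂ c₁ c₂ ht₁C ht₂C hc₁C hc₂C hadj₁ hadj₂ h12).1
  have P23 := (pairs t₂ t₃ c₂ c₃ ht₂C ht₃C hc₂C hc₃C hadj₂ hadj₃ h23).1
  have P13 := (pairs t₁ t₃ c₁ c₃ ht₁C ht₃C hc₁C hc₃C hadj₁ hadj₃ h13).1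
  rcases P12 with h12' | h21
  · rcases P23 with h23' | h32
    · exact chain t₁ t₂ t₃ c₁ c₂ c₃ ht₁C ht₂C ht₃C hc₁C hc₂C hc₃C hadj₁ hadj₂ hadj₃ h12 h23 h12' h23'
    · rcases P13 with h13' | h31
      · exact chain t₁ t₃ t₂ c₁ c₃ c₂ ht₁C ht₃C ht₂C hc₁C hc₃C hc₂C hadj₁ hadj₃ hadj₂ h13
          (Ne.symm h23) h13' h32
      · exact chain t₃ t₁ t₂ c₃ c₁ c₂ ht₃C ht₁C ht₂C hc₃C hc₁C hc₂C hadj₃ hadj₁ hadj₂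
          (Ne.symm h13) h12 h31 h12'
  · rcases P23 with h23' | h32
    · rcases P13 with h13' | h31
      · exact chain t₂ t₁ t₃ c₂ c₁ c₃ ht₂C ht₁C ht₃C hc₂C hc₁C hc₃C hadj₂ hadj₁ hadj₃
          (Ne.symm h12) h13 h21 h13'
      · exact chain t₂ t₃ t₁ c₂ c₃ c₁ ht₂C ht₃C ht₁C hc₂C hc₃C hc₁C hadj₂ hadj₃ hadj₁ h23
          (Ne.symm h13) h23' h31
    · exact chain t₃ t₂ t₁ c₃ c₂ c₁ ht₃C ht₂C ht₁C hc₃C hc₂C hc₁C hadj₃ hadj₂ hadj₁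
        (Ne.symm h23) (Ne.symm h12) h32 h21

end LCAHelp

/-- If `B₂` is the LCA-closure of `B₁ ∪ {root}` in a rooted tree, then
`|B₂| ≤ 2|B₁| + 1` and every connected component `C` of `T − B₂` has at most two
neighbors (all lying in `B₂`). -/
theorem lca_closure {T : Type*} [Fintype T] (tG : SimpleGraph T) (htree : tG.IsTree)
    (r : T) (B₁ B₂ : Set T) (hB₁ : B₁.Nonempty)
    (hsub : B₁ ∪ {r} ⊆ B₂) (hclosed : LCAClosed tG r B₂)
    (hmin : ∀ S : Set T, B₁ ∪ {r} ⊆ S → LCAClosed tG r S → B₂ ⊆ S) :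
    B₂.ncard ≤ 2 * B₁.ncard + 1 ∧
      ∀ C : Set T, C.Nonempty → C ⊆ B₂ᶜ → (tG.induce C).Connected →
        (∀ x ∈ C, ∀ y, tG.Adj x y → y ∉ B₂ → y ∈ C) →
        {t | t ∉ C ∧ ∃ c ∈ C, tG.Adj t c}.ncard ≤ 2 := by
  classical
  constructor
  · obtain ⟨S, h1, h2, h3⟩ := LCAHelp.exists_small_closed htree r B₁.toFinset
    have hsub' : B₂ ⊆ ↑S := hmin ↑S (by rwa [Set.coe_toFinset] at h1) h2
    calc B₂.ncard ≤ (↑S : Set T).ncard := Set.ncard_le_ncard hsub' (Set.toFinite _)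
      _ = S.card := Set.ncard_coe_finset S
      _ ≤ 2 * B₁.toFinset.card + 1 := h3
      _ = 2 * B₁.ncard + 1 := by rw [Set.ncard_eq_toFinset_card']
  · intro C hCne hCcomp hCconn hCcl
    exact LCAHelp.part2 htree r B₂ hclosed C hCcomp hCconn hCcl
end

section
/- Let (S,Y) be a tree decomposition of a graph G_root, and let G_root be obtained from a graph G*_root by the following reverse operation: G*_root contains additional vertices X, and G_root is the graph on V(G*_root) ∖ X where two vertices are adjacent if they are adjacent in G*_root or have a common neighbor in X (where vertices of X form an independent set and each has its neighborhood in V(G*_root)∖X). Define Y'(s) to be Y(s) with each x ∈ X ∩ Y(s) replaced by N_{G*_root}(x). Then (S,Y') is a tree decomposition of G_root, and if every vertex of X has degree at most α in G*_root, then every bag and every adhesion of (S,Y') is at most α times the corresponding bag/adhesion of (S,Y). -/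
lemma Set.Finite.ncard_biUnion_le_mul {ι α : Type*} {t : Set ι} (ht : t.Finite) {s : ι → Set α}
    {n : ℕ} (hs : ∀ i ∈ t, (s i).ncard ≤ n) : (⋃ i ∈ t, s i).ncard ≤ n * t.ncard :=
  calc (⋃ i ∈ t, s i).ncard = (⋃ i ∈ ht.toFinset, s i).ncard := by simp
    _ ≤ ∑ i ∈ ht.toFinset, (s i).ncard := ht.toFinset.set_ncard_biUnion_le s
    _ ≤ ht.toFinset.card • n := Finset.sum_le_card_nsmul _ _ _ (by simpa using hs)
    _ = n * t.ncard := by rw [smul_eq_mul, mul_comm, Set.ncard_eq_toFinset_card t ht]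

def replaceBags {V W S : Type*} (F : V → Set W) (Y : S → Set V) (s : S) : Set W :=
  ⋃ y ∈ Y s, F y

lemma mem_replaceBags {V W S : Type*} {F : V → Set W} {Y : S → Set V} {s : S} {y : V} {w : W}
    (hy : y ∈ Y s) (hw : w ∈ F y) :
    w ∈ replaceBags F Y s :=
  Set.mem_biUnion hy hw

namespace IsTreeDecomp

variable {V W S : Type*} {G : SimpleGraph V} {tS : SimpleGraph S} {Y : S → Set V}
  {F : V → Set W} {c : W → V}

lemma exists_walk_to_bag (hY : IsTreeDecomp G tS Y) {y z : V} {s : S} (hy : y ∈ Y s)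
    (hyz : y = z ∨ G.Adj y z) : ∃ t, z ∈ Y t ∧ ∃ p : tS.Walk s t, ∀ u ∈ p.support, y ∈ Y u := by
  obtain ⟨-, -, hedge, hconn⟩ := hY
  rcases hyz with rfl | hyz
  · exact ⟨s, hy, .nil, by simpa using hy⟩
  · obtain ⟨t, hyt, hzt⟩ := hedge y z hyz
    exact ⟨t, hzt, hconn y s t hy hyt⟩

lemma exists_walk_of_mem_replaceBags (hY : IsTreeDecomp G tS Y)
    (hF : ∀ {w y}, w ∈ F y → y = c w ∨ G.Adj y (c w)) {w : W} {s : S}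
    (hw : w ∈ replaceBags F Y s) :
    ∃ y ∈ Y s, w ∈ F y ∧ ∃ t, c w ∈ Y t ∧ ∃ p : tS.Walk s t, ∀ u ∈ p.support, y ∈ Y u := by
  obtain ⟨y, hy, hwy⟩ := Set.mem_iUnion₂.mp hw
  exact ⟨y, hy, hwy, hY.exists_walk_to_bag hy (hF hwy)⟩

theorem isTreeDecomp_replaceBags (hY : IsTreeDecomp G tS Y) {G' : SimpleGraph W}
    (hc : ∀ w, w ∈ F (c w)) (hF : ∀ {w y}, w ∈ F y → y = c w ∨ G.Adj y (c w))
    (hG' : ∀ u v, G'.Adj u v → ∃ y z, u ∈ F y ∧ v ∈ F z ∧ G.Adj y z) :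
    IsTreeDecomp G' tS (replaceBags F Y) := by
  have ⟨htree, hvert, hedge, hconn⟩ := hY
  refine ⟨htree, fun w => ?_, fun u v huv => ?_, fun w t₁ t₂ h₁ h₂ => ?_⟩
  · obtain ⟨t, ht⟩ := hvert (c w)
    exact ⟨t, mem_replaceBags ht (hc w)⟩
  · obtain ⟨y, z, huy, hvz, hyz⟩ := hG' u v huv
    obtain ⟨t, hyt, hzt⟩ := hedge y z hyz
    exact ⟨t, mem_replaceBags hyt huy, mem_replaceBags hzt hvz⟩
  · obtain ⟨y₁, -, hwy₁, a₁, ha₁, p₁, hp₁⟩ := exists_walk_of_mem_replaceBags hY hF h₁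
    obtain ⟨y₂, -, hwy₂, a₂, ha₂, p₂, hp₂⟩ := exists_walk_of_mem_replaceBags hY hF h₂
    obtain ⟨q, hq⟩ := hconn (c w) a₁ a₂ ha₁ ha₂
    refine ⟨p₁.append (q.append p₂.reverse), fun t ht => ?_⟩
    simp only [SimpleGraph.Walk.mem_support_append_iff, SimpleGraph.Walk.support_reverse,
      List.mem_reverse] at ht
    rcases ht with ht | ht | ht
    · exact mem_replaceBags (hp₁ t ht) hwy₁
    · exact mem_replaceBags (hq t ht) (hc w)
    · exact mem_replaceBags (hp₂ t ht) hwy₂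

lemma replaceBags_inter_subset (hY : IsTreeDecomp G tS Y) (hc : ∀ w, w ∈ F (c w))
    (hF : ∀ {w y}, w ∈ F y → y = c w ∨ G.Adj y (c w)) {s₁ s₂ : S} (hadj : tS.Adj s₁ s₂) :
    replaceBags F Y s₁ ∩ replaceBags F Y s₂ ⊆ ⋃ y ∈ Y s₁ ∩ Y s₂, F y := by
  rintro w ⟨h₁, h₂⟩
  obtain ⟨y₁, hy₁, hwy₁, a₁, ha₁, p₁, hp₁⟩ := exists_walk_of_mem_replaceBags hY hF h₁
  obtain ⟨y₂, hy₂, hwy₂, a₂, ha₂, p₂, hp₂⟩ := exists_walk_of_mem_replaceBags hY hF h₂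
  obtain ⟨htree, -, -, hconn⟩ := hY
  obtain ⟨q, hq⟩ := hconn (c w) a₁ a₂ ha₁ ha₂
  have hbridge := SimpleGraph.isAcyclic_iff_forall_adj_isBridge.mp htree.isAcyclic hadj
  have hedge := SimpleGraph.isBridge_iff_forall_walk_mem_edges.mp hbridge
    (p₁.append (q.append p₂.reverse))
  simp only [SimpleGraph.Walk.edges_append, SimpleGraph.Walk.edges_reverse, List.mem_append,
    List.mem_reverse] at hedge
  rcases hedge with he | he | he
  · exact Set.mem_biUnion ⟨hy₁, hp₁ s₂ (p₁.snd_mem_support_of_mem_edges he)⟩ hwy₁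
  · exact Set.mem_biUnion ⟨hq s₁ (q.fst_mem_support_of_mem_edges he),
      hq s₂ (q.snd_mem_support_of_mem_edges he)⟩ (hc w)
  · exact Set.mem_biUnion ⟨hp₂ s₁ (p₂.fst_mem_support_of_mem_edges he), hy₂⟩ hwy₂

end IsTreeDecomp

section neighborReplacement

variable {V : Type*} {G : SimpleGraph V} {X : Set V}

variable (G X) in
def neighborReplacement (y : V) : Set {v : V // v ∉ X} :=
  {v | ↑v = y ∨ y ∈ X ∧ G.Adj ↑v y}

lemma mem_neighborReplacement_self (v : {v : V // v ∉ X}) : v ∈ neighborReplacement G X v :=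
  Or.inl rfl

lemma eq_or_adj_of_mem_neighborReplacement {v : {v : V // v ∉ X}} {y : V}
    (hv : v ∈ neighborReplacement G X y) : y = v ∨ G.Adj y v := by
  rcases hv with rfl | ⟨-, hadj⟩
  exacts [Or.inl rfl, Or.inr hadj.symm]

lemma replaceBags_neighborReplacement {S : Type*} (Y : S → Set V) (s : S) :
    replaceBags (neighborReplacement G X) Y s =
      {v : {v : V // v ∉ X} | ↑v ∈ Y s ∨ ∃ x ∈ X ∩ Y s, G.Adj ↑v x} := by
  ext v
  simp only [replaceBags, neighborReplacement, Set.mem_iUnion, Set.mem_ofPred_eq,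
    Set.mem_inter_iff, exists_prop]
  constructor
  · rintro ⟨y, hy, rfl | ⟨hyX, hadj⟩⟩
    exacts [Or.inl hy, Or.inr ⟨y, ⟨hyX, hy⟩, hadj⟩]
  · rintro (hv | ⟨x, ⟨hxX, hxY⟩, hadj⟩)
    exacts [⟨v, hv, Or.inl rfl⟩, ⟨x, hxY, Or.inr ⟨hxX, hadj⟩⟩]

lemma exists_mem_neighborReplacement_of_adj {u v : {v : V // v ∉ X}}
    (huv : (SimpleGraph.fromRel fun u v : {v : V // v ∉ X} =>
      G.Adj ↑u ↑v ∨ ∃ x ∈ X, G.Adj (↑u : V) x ∧ G.Adj (↑v : V) x).Adj u v) :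
    ∃ y z, u ∈ neighborReplacement G X y ∧ v ∈ neighborReplacement G X z ∧ G.Adj y z := by
  rcases huv with ⟨-, (huv | ⟨x, hxX, hux, hvx⟩) | (hvu | ⟨x, hxX, hvx, hux⟩)⟩
  · exact ⟨u, v, mem_neighborReplacement_self u, mem_neighborReplacement_self v, huv⟩
  · exact ⟨u, x, mem_neighborReplacement_self u, Or.inr ⟨hxX, hvx⟩, hux⟩
  · exact ⟨u, v, mem_neighborReplacement_self u, mem_neighborReplacement_self v, hvu.symm⟩
  · exact ⟨u, x, mem_neighborReplacement_self u, Or.inr ⟨hxX, hvx⟩, hux⟩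

lemma ncard_neighborReplacement_le [Finite V] {α : ℕ} (hα : 1 ≤ α)
    (hdeg : ∀ x ∈ X, (G.neighborSet x).ncard ≤ α) (y : V) :
    (neighborReplacement G X y).ncard ≤ α := by
  by_cases hy : y ∈ X
  · have hsub : Subtype.val '' neighborReplacement G X y ⊆ G.neighborSet y := by
      rintro _ ⟨v, hv | ⟨-, hv⟩, rfl⟩
      · exact absurd hy (hv ▸ v.2)
      · exact hv.symm
    calc (neighborReplacement G X y).ncard
        = (Subtype.val '' neighborReplacement G X y).ncard :=
          (Set.ncard_image_of_injective _ Subtype.val_injective).symm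
      _ ≤ (G.neighborSet y).ncard := Set.ncard_le_ncard hsub
      _ ≤ α := hdeg y hy
  · have hsub : neighborReplacement G X y ⊆ {⟨y, hy⟩} := by
      rintro v (hv | ⟨hyX, -⟩)
      · exact Subtype.ext hv
      · exact absurd hyX hy
    calc (neighborReplacement G X y).ncard ≤ ({⟨y, hy⟩} : Set {v : V // v ∉ X}).ncard :=
          Set.ncard_le_ncard hsub
      _ = 1 := Set.ncard_singleton _
      _ ≤ α := hα

end neighborReplacement

theorem bag_replacement_decomp_general {V S : Type*} [Fintype V]
    (Gstar : SimpleGraph V) (X : Set V) (α : ℕ) (hα : 1 ≤ α)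
    (hdeg : ∀ x ∈ X, (Gstar.neighborSet x).ncard ≤ α)
    (tS : SimpleGraph S) (Y : S → Set V)
    (hdecomp : IsTreeDecomp Gstar tS Y) :
    let Groot : SimpleGraph {v : V // v ∉ X} :=
      SimpleGraph.fromRel (fun u v =>
        Gstar.Adj ↑u ↑v ∨ ∃ x ∈ X, Gstar.Adj (↑u : V) x ∧ Gstar.Adj (↑v : V) x)
    let Y' : S → Set {v : V // v ∉ X} :=
      fun s => {v | (↑v ∈ Y s) ∨ ∃ x ∈ X ∩ Y s, Gstar.Adj (↑v : V) x}
    IsTreeDecomp Groot tS Y' ∧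
      (∀ s, (Y' s).ncard ≤ α * (Y s).ncard) ∧
      (∀ s₁ s₂, tS.Adj s₁ s₂ → (Y' s₁ ∩ Y' s₂).ncard ≤ α * (Y s₁ ∩ Y s₂).ncard) := by
  intro Groot Y'
  have hY' : Y' = replaceBags (neighborReplacement Gstar X) Y :=
    funext fun s => (replaceBags_neighborReplacement Y s).symm
  have hFcard := ncard_neighborReplacement_le hα hdeg
  have hc := mem_neighborReplacement_self (G := Gstar) (X := X)
  rw [hY']
  refine ⟨hdecomp.isTreeDecomp_replaceBags hc eq_or_adj_of_mem_neighborReplacement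
      fun _ _ => exists_mem_neighborReplacement_of_adj,
    fun s => (Set.toFinite _).ncard_biUnion_le_mul fun y _ => hFcard y,
    fun s₁ s₂ hadj => ?_⟩
  calc _ ≤ (⋃ y ∈ Y s₁ ∩ Y s₂, neighborReplacement Gstar X y).ncard :=
        Set.ncard_le_ncard
          (hdecomp.replaceBags_inter_subset hc eq_or_adj_of_mem_neighborReplacement hadj)
    _ ≤ α * (Y s₁ ∩ Y s₂).ncard := (Set.toFinite _).ncard_biUnion_le_mul fun y _ => hFcard y

/-- Replacing vertices of an independent set `X` (each of degree at most `α`) in the bags of a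
tree decomposition of `G*` by their neighborhoods yields a tree decomposition of the graph
`G_root` obtained from `G*` by deleting `X` and making the neighborhood of each `x ∈ X` a
clique; bags and adhesions grow by a factor at most `α`. -/
theorem bag_replacement_decomp {V S : Type*} [Fintype V] [Fintype S]
    (Gstar : SimpleGraph V) (X : Set V) (α : ℕ) (hα : 1 ≤ α)
    (hind : ∀ x ∈ X, ∀ y ∈ X, ¬ Gstar.Adj x y)
    (hdeg : ∀ x ∈ X, (Gstar.neighborSet x).ncard ≤ α)
    (tS : SimpleGraph S) (Y : S → Set V)
    (hdecomp : IsTreeDecomp Gstar tS Y) :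
    let Groot : SimpleGraph {v : V // v ∉ X} :=
      SimpleGraph.fromRel (fun u v =>
        Gstar.Adj ↑u ↑v ∨ ∃ x ∈ X, Gstar.Adj (↑u : V) x ∧ Gstar.Adj (↑v : V) x)
    let Y' : S → Set {v : V // v ∉ X} :=
      fun s => {v | (↑v ∈ Y s) ∨ ∃ x ∈ X ∩ Y s, Gstar.Adj (↑v : V) x}
    IsTreeDecomp Groot tS Y' ∧
      (∀ s, (Y' s).ncard ≤ α * (Y s).ncard) ∧
      (∀ s₁ s₂, tS.Adj s₁ s₂ → (Y' s₁ ∩ Y' s₂).ncard ≤ α * (Y s₁ ∩ Y s₂).ncard) :=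
  bag_replacement_decomp_general Gstar X α hα hdeg tS Y hdecomp
end
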